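/- Let B be a C*-algebra, E a Hilbert B-module, I a closed two-sided ideal of B, and z ∈ E. If ⟨z,z⟩ ∈ I, then z lies in the closed linear span of {x·i : x ∈ E, i ∈ I}. Consequently, on the quotient of E by the ideal submodule K associated with I, the formula ⟨x+K, y+K⟩ := ⟨x,y⟩ + I defines a well-defined and definite B/I-valued inner product. -/

import Mathlib

open scoped RightActions

/-- The closed linear span of a subset of a topological `ℂ`-module. -/
noncomputable def clSpan {M : Type*} [AddCommMonoid M] [Module ℂ M] [TopologicalSpace M]
    (S : Set M) : Set M :=
  closure (Submodule.span ℂ S : Set M)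

/-- A subset is a (complex) linear subspace. -/
def IsLinearSubspace {M : Type*} [AddCommMonoid M] [Module ℂ M] (K : Set M) : Prop :=
  (0 : M) ∈ K ∧ (∀ x ∈ K, ∀ y ∈ K, x + y ∈ K) ∧ ∀ (c : ℂ), ∀ x ∈ K, c • x ∈ K

/-- A closed two-sided ideal of a C*-algebra `B`. -/
structure IsClosedTwoSidedIdeal {B : Type*} [NonUnitalCStarAlgebra B] (I : Set B) : Prop where
  isClosed : IsClosed I
  subspace : IsLinearSubspace I
  mul_mem_left : ∀ (b : B), ∀ a ∈ I, b * a ∈ I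
  mul_mem_right : ∀ (b : B), ∀ a ∈ I, a * b ∈ I

/-- The December 2024 Mathlib `CStarModule` (right action through `Aᵐᵒᵖ`), whose name
Mathlib now uses for a class with a different (left) action. -/
class OldCStarModule (A E : Type*) [NonUnitalSemiring A] [StarRing A] [Module ℂ A]
    [AddCommGroup E] [Module ℂ E] [PartialOrder A] [SMul Aᵐᵒᵖ E] [Norm A] [Norm E]
    extends Inner A E where
  inner_add_right {x} {y} {z} : inner x (y + z) = inner x y + inner x z
  inner_self_nonneg {x} : 0 ≤ inner x x
  inner_self {x} : inner x x = 0 ↔ x = 0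
  inner_op_smul_right {a : A} {x y : E} : inner x (y <• a) = inner x y * a
  inner_smul_right_complex {z : ℂ} {x} {y} : inner x (z • y) = z • inner x y
  star_inner x y : star (inner x y) = inner y x
  norm_eq_sqrt_norm_inner_self x : ‖x‖ = √‖inner x x‖

section HilbertModule

variable (B : Type*) [NonUnitalCStarAlgebra B] [PartialOrder B] [StarOrderedRing B]
variable {E : Type*} [NormedAddCommGroup E] [NormedSpace ℂ E] [SMul Bᵐᵒᵖ E] [OldCStarModule B E]

/-- `K ⊆ E` is an *ideal submodule* if it is the closed linear span of
`{x <• i : x ∈ E, i ∈ I}` for some closed two-sided ideal `I` of `B`. -/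
def IsIdealSubmodule (K : Set E) : Prop :=
  ∃ I : Set B, IsClosedTwoSidedIdeal I ∧
    K = clSpan {z : E | ∃ x : E, ∃ i ∈ I, z = x <• i}

/-- A *ternary ideal* of a Hilbert `B`-module `E`: a linear subspace `K` with
`x <• ⟪k, y⟫ ∈ K` for all `x y ∈ E` and `k ∈ K`. -/
def IsTernaryIdeal (K : Set E) : Prop :=
  IsLinearSubspace K ∧ ∀ (x y : E), ∀ k ∈ K, x <• (inner B k y : B) ∈ K

/-- `B_S`: the closed linear span in `B` of all inner products of elements of `S`. -/
noncomputable def rangeIdeal (S : Set E) : Set B :=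
  clSpan {b : B | ∃ k ∈ S, ∃ k' ∈ S, b = (inner B k k' : B)}

/-- The orthogonal complement of a subset of a Hilbert `B`-module. -/
def perp (S : Set E) : Set E :=
  {x : E | ∀ s ∈ S, (inner B x s : B) = 0}

end HilbertModule

/-!
For `0 ≤ a ∈ I` and `ε > 0`, the element `b = a (a + ε)⁻¹` of the functional calculus lies in
`I`, and `(1 - b) a (1 - b) = ε² (a + ε)⁻¹ a (a + ε)⁻¹` has norm at most `ε`. With `a = ⟪z, z⟫`
this reads `‖z - z b‖² ≤ ε`, so `z` is a limit of elements `z b` of the ideal submodule. The same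
estimate for `a = i⋆ i` in `B` shows that `star i` is a limit of `b i⋆ ∈ I`, i.e. closed ideals
are self-adjoint. Together with the continuity of `⟪y, ·⟫` (Cauchy–Schwarz) this puts `⟪y, k⟫`
and `⟪k, y⟫` in `I` for every `k` in the ideal submodule, which is what makes the `B/I`-valued
inner product on the quotient well defined.
-/

section Unital

variable {A : Type*} [CStarAlgebra A] [PartialOrder A] [StarOrderedRing A]

lemma add_pos_of_mem_spectrum {a : A} (ha : 0 ≤ a) {ε : ℝ} (hε : 0 < ε) {t : ℝ}
    (ht : t ∈ spectrum ℝ a) : 0 < t + ε :=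
  add_pos_of_nonneg_of_pos (spectrum_nonneg_of_nonneg ha ht) hε

lemma continuousOn_inv_add_spectrum {a : A} (ha : 0 ≤ a) {ε : ℝ} (hε : 0 < ε) :
    ContinuousOn (fun t : ℝ => (t + ε)⁻¹) (spectrum ℝ a) :=
  ContinuousOn.inv₀ (by fun_prop) fun _ ht => (add_pos_of_mem_spectrum ha hε ht).ne'

lemma one_sub_mul_cfc_inv_add_eq {a : A} (ha : 0 ≤ a) {ε : ℝ} (hε : 0 < ε) :
    1 - a * cfc (fun t : ℝ => (t + ε)⁻¹) a = ε • cfc (fun t : ℝ => (t + ε)⁻¹) a := by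
  have hg := continuousOn_inv_add_spectrum ha hε
  calc 1 - a * cfc (fun t : ℝ => (t + ε)⁻¹) a = cfc (fun t : ℝ => 1 - t * (t + ε)⁻¹) a := by
        rw [cfc_sub .., cfc_const_one ℝ a, cfc_mul .., cfc_id' ℝ a]
    _ = cfc (fun t : ℝ => ε * (t + ε)⁻¹) a := cfc_congr fun t ht => by
        have := (add_pos_of_mem_spectrum ha hε ht).ne'
        field_simp
        ring
    _ = ε • cfc (fun t : ℝ => (t + ε)⁻¹) a := cfc_const_mul ..

lemma norm_cfc_inv_add_mul_mul_le {a : A} (ha : 0 ≤ a) {ε : ℝ} (hε : 0 < ε) :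
    ‖cfc (fun t : ℝ => (t + ε)⁻¹) a * a * cfc (fun t : ℝ => (t + ε)⁻¹) a‖ ≤ ε⁻¹ := by
  have hg := continuousOn_inv_add_spectrum ha hε
  have hgag : cfc (fun t : ℝ => (t + ε)⁻¹) a * a * cfc (fun t : ℝ => (t + ε)⁻¹) a
      = cfc (fun t : ℝ => (t + ε)⁻¹ * t * (t + ε)⁻¹) a := by
    rw [cfc_mul .., cfc_mul .., cfc_id' ℝ a]
  rw [hgag]
  refine norm_cfc_le (by positivity) fun t ht => ?_
  have ht0 := spectrum_nonneg_of_nonneg ha ht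
  have htε := add_pos_of_mem_spectrum ha hε ht
  rw [Real.norm_of_nonneg (by positivity), mul_assoc, ← div_eq_mul_inv]
  calc (t + ε)⁻¹ * (t / (t + ε)) ≤ ε⁻¹ * 1 := by
        gcongr
        · linarith
        · exact div_le_one_of_le₀ (by linarith) htε.le
    _ = ε⁻¹ := mul_one _

lemma norm_one_sub_mul_cfc_inv_add_conj_le {a : A} (ha : 0 ≤ a) {ε : ℝ} (hε : 0 < ε) :
    ‖(1 - a * cfc (fun t : ℝ => (t + ε)⁻¹) a) * a * (1 - a * cfc (fun t : ℝ => (t + ε)⁻¹) a)‖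
      ≤ ε := by
  rw [one_sub_mul_cfc_inv_add_eq ha hε]
  simp only [smul_mul_assoc, mul_smul_comm, smul_smul]
  rw [norm_smul, Real.norm_of_nonneg (by positivity)]
  calc ε * ε * ‖_‖ ≤ ε * ε * ε⁻¹ := by gcongr; exact norm_cfc_inv_add_mul_mul_le ha hε
    _ = ε := by field_simp

end Unital

namespace IsClosedTwoSidedIdeal

variable {B : Type*} [NonUnitalCStarAlgebra B] [PartialOrder B] [StarOrderedRing B] {I : Set B}

lemma exists_isSelfAdjoint_mem_norm_conj_one_sub_lt (hI : IsClosedTwoSidedIdeal I) {a : B}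
    (haI : a ∈ I) (ha : 0 ≤ a) {ε : ℝ} (hε : 0 < ε) :
    ∃ b ∈ I, IsSelfAdjoint b ∧ ‖a - b * a - a * b + b * a * b‖ < ε := by
  set g := cfc (fun t : ℝ => (t + ε / 2)⁻¹) (a : Unitization ℂ B)
  set c := (a : Unitization ℂ B) * g
  have ha' : (0 : Unitization ℂ B) ≤ a := Unitization.inr_nonneg_iff.mpr ha
  have hc : ((c.snd : B) : Unitization ℂ B) = c :=
    Unitization.ext (by simp [c, Unitization.fst_mul]) rfl
  have hc_sa : IsSelfAdjoint c := by
    refine (IsSelfAdjoint.commute_iff ha'.isSelfAdjoint (cfc_predicate _ _)).mp ?_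
    simpa only [cfc_id' ℝ (a : Unitization ℂ B)] using
      cfc_commute_cfc (fun t : ℝ => t) (fun t : ℝ => (t + ε / 2)⁻¹) (a : Unitization ℂ B)
  refine ⟨c.snd, ?_, .of_inr (by rwa [hc]), ?_⟩
  · rw [Unitization.snd_mul, Unitization.fst_inr, zero_smul, zero_add, Unitization.snd_inr]
    exact hI.subspace.2.1 _ (hI.subspace.2.2 _ a haI) _ (hI.mul_mem_right _ a haI)
  · have key := norm_one_sub_mul_cfc_inv_add_conj_le ha' (half_pos hε)
    rw [← Unitization.norm_inr (𝕜 := ℂ)]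
    calc _ = ‖(1 - c) * (a : Unitization ℂ B) * (1 - c)‖ := by
          push_cast [hc]
          noncomm_ring
      _ < ε := key.trans_lt (half_lt_self hε)

lemma star_mem (hI : IsClosedTwoSidedIdeal I) {i : B} (hi : i ∈ I) : star i ∈ I := by
  rw [← hI.isClosed.closure_eq, Metric.mem_closure_iff]
  intro ε hε
  obtain ⟨b, hbI, hb, hnorm⟩ := hI.exists_isSelfAdjoint_mem_norm_conj_one_sub_lt
    (hI.mul_mem_left (star i) i hi) (star_mul_self_nonneg i) (pow_pos hε 2)
  refine ⟨b * star i, hI.mul_mem_right _ b hbI, ?_⟩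
  have hstar : star i - b * star i = star (i - i * b) := by
    rw [star_sub, star_mul, hb.star_eq]
  rw [dist_eq_norm, hstar, norm_star]
  refine lt_of_pow_lt_pow_left₀ 2 hε.le ?_
  calc ‖i - i * b‖ ^ 2 = ‖star (i - i * b) * (i - i * b)‖ := by
        rw [CStarRing.norm_star_mul_self, sq]
    _ = ‖star i * i - b * (star i * i) - star i * i * b + b * (star i * i) * b‖ := by
        rw [star_sub, star_mul, hb.star_eq]
        noncomm_ring
    _ < ε ^ 2 := hnorm

end IsClosedTwoSidedIdeal

namespace OldCStarModule

variable {B : Type*} [NonUnitalCStarAlgebra B] [PartialOrder B]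
variable {E : Type*} [NormedAddCommGroup E] [NormedSpace ℂ E] [SMul Bᵐᵒᵖ E] [OldCStarModule B E]

local notation "⟪" x ", " y "⟫" => inner B x y

variable (B) in
def innerₗ (x : E) : E →ₗ[ℂ] B where
  toFun := inner B x
  map_add' _ _ := inner_add_right
  map_smul' _ _ := inner_smul_right_complex

lemma inner_sub_right (x y z : E) : ⟪x, y - z⟫ = ⟪x, y⟫ - ⟪x, z⟫ :=
  map_sub (innerₗ B x) y z

lemma inner_zero_left (y : E) : ⟪0, y⟫ = 0 := by
  rw [← star_inner, ← star_zero B]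
  exact congrArg star (map_zero (innerₗ B y))

lemma inner_sub_left (x y z : E) : ⟪x - y, z⟫ = ⟪x, z⟫ - ⟪y, z⟫ := by
  rw [← star_inner z, inner_sub_right, star_sub, star_inner, star_inner]

lemma inner_op_smul_left (a : B) (x y : E) : ⟪x <• a, y⟫ = star a * ⟪x, y⟫ := by
  rw [← star_inner y, inner_op_smul_right, star_mul, star_inner]

lemma inner_smul_left_complex (c : ℂ) (x y : E) : ⟪c • x, y⟫ = star c • ⟪x, y⟫ := by
  rw [← star_inner y, inner_smul_right_complex, star_smul, star_inner]

lemma norm_sq_eq (x : E) : ‖x‖ ^ 2 = ‖⟪x, x⟫‖ := by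
  rw [norm_eq_sqrt_norm_inner_self (A := B) x, Real.sq_sqrt (norm_nonneg _)]

variable [StarOrderedRing B]

lemma inner_mul_inner_swap_le (x y : E) : ⟪y, x⟫ * ⟪x, y⟫ ≤ ‖x‖ ^ 2 • ⟪y, y⟫ := by
  rcases eq_or_ne x 0 with rfl | hx
  · simp [inner_zero_left]
  set a := ⟪x, y⟫
  set r := ‖x‖ ^ 2
  have hr : 0 < r := by positivity
  have hexp : ⟪x <• a - (r : ℂ) • y, x <• a - (r : ℂ) • y⟫
      = star a * ⟪x, x⟫ * a - r • (star a * a) - r • (star a * a) + r • r • ⟪y, y⟫ := by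
    simp only [inner_sub_left, inner_sub_right, inner_op_smul_left, inner_op_smul_right,
      inner_smul_left_complex, inner_smul_right_complex]
    simp only [Complex.star_def, Complex.conj_ofReal, Complex.coe_smul, ← star_inner x y,
      sub_mul, smul_mul_assoc, mul_assoc, smul_sub]
    abel
  have hconj : star a * ⟪x, x⟫ * a ≤ r • (star a * a) := by
    have := CStarAlgebra.star_left_conjugate_le_norm_smul (a := a) (b := ⟪x, x⟫) (star_inner x x)
    rwa [← norm_sq_eq] at this
  have hpos : 0 ≤ r • (r • ⟪y, y⟫ - star a * a) := calc
    (0 : B) ≤ ⟪x <• a - (r : ℂ) • y, x <• a - (r : ℂ) • y⟫ := inner_self_nonneg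
    _ ≤ r • (star a * a) - r • (star a * a) - r • (star a * a) + r • r • ⟪y, y⟫ := by
      rw [hexp]; gcongr
    _ = r • (r • ⟪y, y⟫ - star a * a) := by rw [smul_sub]; abel
  rw [← star_inner x y]
  exact sub_nonneg.mp ((smul_nonneg_iff_nonneg_of_pos_left hr).mp hpos)

lemma norm_inner_le (x y : E) : ‖⟪x, y⟫‖ ≤ ‖x‖ * ‖y‖ := by
  refine le_of_pow_le_pow_left₀ two_ne_zero (by positivity) ?_
  calc ‖⟪x, y⟫‖ ^ 2 = ‖⟪y, x⟫ * ⟪x, y⟫‖ := by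
        rw [← star_inner x y, CStarRing.norm_star_mul_self, sq]
    _ ≤ ‖‖x‖ ^ 2 • ⟪y, y⟫‖ := CStarAlgebra.norm_le_norm_of_nonneg_of_le
        (by rw [← star_inner x y]; exact star_mul_self_nonneg _) (inner_mul_inner_swap_le x y)
    _ = (‖x‖ * ‖y‖) ^ 2 := by
        rw [norm_smul, ← norm_sq_eq y, Real.norm_of_nonneg (by positivity), mul_pow]

lemma continuous_inner_right (x : E) : Continuous (inner B x : E → B) :=
  ((innerₗ B x).mkContinuous ‖x‖ (norm_inner_le x)).continuous

end OldCStarModule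

def IsLinearSubspace.toSubmodule {M : Type*} [AddCommMonoid M] [Module ℂ M] {K : Set M}
    (hK : IsLinearSubspace K) : Submodule ℂ M where
  carrier := K
  zero_mem' := hK.1
  add_mem' ha hb := hK.2.1 _ ha _ hb
  smul_mem' := hK.2.2

def idealSubmodule {B E : Type*} [AddCommMonoid E] [Module ℂ E] [TopologicalSpace E]
    [SMul Bᵐᵒᵖ E] (I : Set B) : Set E :=
  clSpan {z : E | ∃ x : E, ∃ i ∈ I, z = x <• i}

namespace OldCStarModule

variable {B : Type*} [NonUnitalCStarAlgebra B] [PartialOrder B] [StarOrderedRing B] {I : Set B}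
variable {E : Type*} [NormedAddCommGroup E] [NormedSpace ℂ E] [SMul Bᵐᵒᵖ E] [OldCStarModule B E]

local notation "⟪" x ", " y "⟫" => inner B x y

lemma inner_mem_of_mem_idealSubmodule (hI : IsClosedTwoSidedIdeal I) (y : E) {k : E}
    (hk : k ∈ idealSubmodule I) : ⟪y, k⟫ ∈ I := by
  have hspan : Submodule.span ℂ {z : E | ∃ x : E, ∃ i ∈ I, z = x <• i}
      ≤ hI.subspace.toSubmodule.comap (innerₗ B y) := by
    rw [Submodule.span_le]
    rintro _ ⟨x, i, hi, rfl⟩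
    change ⟪y, x <• i⟫ ∈ I
    rw [inner_op_smul_right]
    exact hI.mul_mem_left _ i hi
  exact closure_minimal (t := inner B y ⁻¹' I) hspan
    (hI.isClosed.preimage (continuous_inner_right y)) hk

lemma mem_idealSubmodule_of_inner_self_mem (hI : IsClosedTwoSidedIdeal I) {z : E}
    (hz : ⟪z, z⟫ ∈ I) : z ∈ idealSubmodule I := by
  rw [idealSubmodule, clSpan, Metric.mem_closure_iff]
  intro ε hε
  obtain ⟨b, hbI, hb, hnorm⟩ :=
    hI.exists_isSelfAdjoint_mem_norm_conj_one_sub_lt hz inner_self_nonneg (pow_pos hε 2)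
  refine ⟨z <• b, Submodule.subset_span ⟨z, b, hbI, rfl⟩, ?_⟩
  rw [dist_eq_norm]
  refine lt_of_pow_lt_pow_left₀ 2 hε.le ?_
  calc ‖z - z <• b‖ ^ 2 = ‖⟪z, z⟫ - b * ⟪z, z⟫ - ⟪z, z⟫ * b + b * ⟪z, z⟫ * b‖ := by
        rw [norm_sq_eq (B := B)]
        congr 1
        simp only [inner_sub_left, inner_sub_right, inner_op_smul_left, inner_op_smul_right,
          hb.star_eq]
        noncomm_ring
    _ < ε ^ 2 := hnorm

lemma inner_sub_inner_mem_of_sub_mem_idealSubmodule (hI : IsClosedTwoSidedIdeal I)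
    {x x' y y' : E} (hx : x - x' ∈ idealSubmodule I) (hy : y - y' ∈ idealSubmodule I) :
    ⟪x, y⟫ - ⟪x', y'⟫ ∈ I := by
  have hleft : ⟪x - x', y⟫ ∈ I := by
    rw [← star_inner]
    exact hI.star_mem (inner_mem_of_mem_idealSubmodule hI y hx)
  have hright : ⟪x', y - y'⟫ ∈ I := inner_mem_of_mem_idealSubmodule hI x' hy
  have hsplit : ⟪x, y⟫ - ⟪x', y'⟫ = ⟪x - x', y⟫ + ⟪x', y - y'⟫ := by
    rw [inner_sub_left, inner_sub_right]
    abel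
  exact hsplit ▸ hI.subspace.2.1 _ hleft _ hright

end OldCStarModule

theorem inner_self_mem_ideal_imp_mem_idealSubmodule_general
    {B : Type*} [NonUnitalCStarAlgebra B] [PartialOrder B] [StarOrderedRing B]
    {E : Type*} [NormedAddCommGroup E] [NormedSpace ℂ E] [SMul Bᵐᵒᵖ E]
    [OldCStarModule B E] (I : Set B) (hI : IsClosedTwoSidedIdeal I)
    (K : Set E) (hKdef : K = clSpan {z : E | ∃ x : E, ∃ i ∈ I, z = x <• i}) :
    (∀ z : E, (inner B z z : B) ∈ I → z ∈ K) ∧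
    (∀ x x' y y' : E, x - x' ∈ K → y - y' ∈ K →
      (inner B x y : B) - (inner B x' y' : B) ∈ I) ∧
    (∀ x : E, (inner B x x : B) ∈ I → x ∈ K) := by
  subst hKdef
  have hmem (z : E) : (inner B z z : B) ∈ I → z ∈ idealSubmodule I :=
    OldCStarModule.mem_idealSubmodule_of_inner_self_mem hI
  exact ⟨hmem, fun _ _ _ _ => OldCStarModule.inner_sub_inner_mem_of_sub_mem_idealSubmodule hI,
    hmem⟩

/-- if `⟨z,z⟩ ∈ I` then `z` lies in the ideal submodule `K` associated with
`I`; consequently `⟨x+K, y+K⟩ := ⟨x,y⟩ + I` is a well-defined and definite `B/I`-valued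
inner product on `E/K`. -/
theorem inner_self_mem_ideal_imp_mem_idealSubmodule
    {B : Type*} [NonUnitalCStarAlgebra B] [PartialOrder B] [StarOrderedRing B]
    {E : Type*} [NormedAddCommGroup E] [NormedSpace ℂ E] [SMul Bᵐᵒᵖ E]
    [OldCStarModule B E] [CompleteSpace E] (I : Set B) (hI : IsClosedTwoSidedIdeal I)
    (K : Set E) (hKdef : K = clSpan {z : E | ∃ x : E, ∃ i ∈ I, z = x <• i}) :
    (∀ z : E, (inner B z z : B) ∈ I → z ∈ K) ∧
    (∀ x x' y y' : E, x - x' ∈ K → y - y' ∈ K →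
      (inner B x y : B) - (inner B x' y' : B) ∈ I) ∧
    (∀ x : E, (inner B x x : B) ∈ I → x ∈ K) :=
  inner_self_mem_ideal_imp_mem_idealSubmodule_general I hI K hKdef
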